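/- The biased two-level construction is a reverse block source: let S ⊆ {0,1}^{bN} with |S| = 2^{bN−1}, and let X be the distribution that is uniform on S with total probability 2^{−δ} and uniform on {0,1}^{bN} \ S with total probability 1 − 2^{−δ}, where 0 < δ < 1. Then X is a (b,N,δ)-reverse block source. -/

import Mathlib

open Finset

/-- `P` is a classical `(b, M, δ)`-reverse block source (samples of `b` bits), stated
multiplicatively: conditional min-entropy of blocks `k..i` given any assignment of the
future blocks is at least `(i-k+1)δb`. -/
def IsRBS (b M : ℕ) (δ : ℝ) (P : (Fin M → (Fin b → Bool)) → ℝ) : Prop :=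
  ∀ k i : ℕ, k ≤ i → i < M → ∀ xs z : Fin M → (Fin b → Bool),
    (∑ x ∈ univ.filter (fun x : Fin M → (Fin b → Bool) =>
        (∀ j : Fin M, k ≤ (j : ℕ) → (j : ℕ) ≤ i → x j = z j) ∧
        (∀ j : Fin M, i < (j : ℕ) → x j = xs j)), P x)
      ≤ (2 : ℝ) ^ (-((((i : ℝ) - k + 1)) * (δ * b))) *
        (∑ x ∈ univ.filter (fun x : Fin M → (Fin b → Bool) =>
          ∀ j : Fin M, i < (j : ℕ) → x j = xs j), P x)

lemma card_lt_subtype {N c : ℕ} (h : c ≤ N) : Fintype.card {j : Fin N // (j:ℕ) < c} = c := by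
  have e : {j : Fin N // (j:ℕ) < c} ≃ Fin c :=
    { toFun := fun j => ⟨j.1, j.2⟩
      invFun := fun j => ⟨⟨j.1, lt_of_lt_of_le j.2 h⟩, j.2⟩
      left_inv := fun j => rfl
      right_inv := fun j => rfl }
  simp [Fintype.card_congr e]

lemma card_filter_eq_on {N b : ℕ} (p : Fin N → Prop) [DecidablePred p]
    (y : Fin N → (Fin b → Bool)) :
    (univ.filter (fun x : Fin N → (Fin b → Bool) => ∀ j, p j → x j = y j)).card
      = (2 ^ b) ^ (Fintype.card {j : Fin N // ¬ p j}) := by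
  rw [← Fintype.card_subtype]
  have e : {x : Fin N → (Fin b → Bool) // ∀ j, p j → x j = y j}
      ≃ ({j : Fin N // ¬ p j} → (Fin b → Bool)) :=
    { toFun := fun x j => x.1 j.1
      invFun := fun g => ⟨fun j => if h : p j then y j else g ⟨j, h⟩,
        fun j hj => dif_pos hj⟩
      left_inv := fun x => Subtype.ext (funext fun j => by
        by_cases h : p j
        · simp [h, x.2 j h]
        · simp [h])
      right_inv := fun g => funext fun j => by
        cases j with | mk j hj => simp [hj] }
  rw [Fintype.card_congr e]
  simp [Fintype.card_fun, Fintype.card_subtype]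

lemma key_ineq (n : ℕ) (δ : ℝ) (hδ : 0 ≤ δ) (hδ1 : δ ≤ 1) :
    (2:ℝ) ^ (δ * n) - 1 ≤ ((2:ℝ) ^ n - 1) * ((2:ℝ) ^ δ - 1) := by
  have hx1 : (1:ℝ) ≤ (2:ℝ) ^ δ := by
    have := Real.rpow_le_rpow_of_exponent_le (x := 2) one_le_two hδ
    simpa using this
  have hx2 : (2:ℝ) ^ δ ≤ 2 := by
    have := Real.rpow_le_rpow_of_exponent_le (x := 2) one_le_two hδ1
    simpa using this
  have hpow : (2:ℝ) ^ (δ * (n:ℝ)) = ((2:ℝ) ^ δ) ^ n := by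
    rw [Real.rpow_mul (by norm_num), Real.rpow_natCast]
  rw [hpow]
  set x : ℝ := (2:ℝ) ^ δ with hx
  have h1 : x ^ n - 1 = (∑ i ∈ range n, x ^ i) * (x - 1) := (geom_sum_mul x n).symm
  have h2 : (2:ℝ) ^ n - 1 = (∑ i ∈ range n, (2:ℝ) ^ i) * (2 - 1) := (geom_sum_mul 2 n).symm
  have hsum : (∑ i ∈ range n, x ^ i) ≤ ∑ i ∈ range n, (2:ℝ) ^ i :=
    Finset.sum_le_sum fun i _ => pow_le_pow_left₀ (by linarith) hx2 i
  rw [h1, h2]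
  nlinarith [hsum, hx1]

lemma sum_split {α : Type*} [DecidableEq α] (T S' : Finset α) (c1 c2 : ℝ) :
    ∑ x ∈ T, (if x ∈ S' then c1 else c2) = (T ∩ S').card * c1 + (T \ S').card * c2 := by
  rw [Finset.sum_ite, Finset.sum_const, Finset.sum_const, nsmul_eq_mul, nsmul_eq_mul,
    Finset.filter_mem_eq_inter, ← Finset.sdiff_eq_filter]

lemma core_ineq (t lam E Pn a c A0 : ℝ)
    (ht2 : 1/2 ≤ t)
    (hl0 : 0 < lam) (hl1 : lam ≤ 1)
    (hlE : lam * E = 1)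
    (key : t * (E - 1) ≤ (Pn - 1) * (1 - t))
    (hac : a ≤ c) (ha0 : 0 ≤ a) (haA : a ≤ A0) :
    a * t + (A0 - a) * (1 - t) ≤ lam * (c * t + (A0 * Pn - c) * (1 - t)) := by
  have h1 : 0 ≤ lam * (c - a) * (2*t - 1) := by
    apply mul_nonneg (mul_nonneg hl0.le (by linarith)) (by linarith)
  have h2 : lam * A0 * (t * (E - 1)) ≤ lam * A0 * ((Pn - 1) * (1 - t)) :=
    mul_le_mul_of_nonneg_left key (mul_nonneg hl0.le (by linarith))
  have h3 : 0 ≤ (1 - lam) * (A0 - a) * (2*t - 1) := by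
    apply mul_nonneg (mul_nonneg (by linarith) (by linarith)) (by linarith)
  have h4 : A0 * t * (lam * E) = A0 * t := by rw [hlE, mul_one]
  nlinarith [h1, h2, h3, h4]

/-- The biased two-level construction is a reverse block source: if `S ⊆ {0,1}^{bN}` has
`|S| = 2^{bN-1}` and `X` is uniform on `S` with total probability `2^{-δ}` and uniform on
the complement with total probability `1 - 2^{-δ}`, then `X` is a `(b,N,δ)`-reverse block
source. -/
theorem stmt10 (b N : ℕ) (hb : 0 < b) (hN : 0 < N) (δ : ℝ) (hδ : 0 < δ) (hδ1 : δ < 1)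
    (S : Finset (Fin N → (Fin b → Bool))) (hS : S.card = 2 ^ (b * N - 1))
    (P : (Fin N → (Fin b → Bool)) → ℝ)
    (hP : ∀ x, P x = if x ∈ S then (2 : ℝ) ^ (-δ) / S.card
      else (1 - (2 : ℝ) ^ (-δ)) / ((univ \ S).card)) :
    IsRBS b N δ P := by
  intro k i hki hiN xs z
  classical
  set A : Finset (Fin N → (Fin b → Bool)) := univ.filter (fun x : Fin N → (Fin b → Bool) =>
        (∀ j : Fin N, k ≤ (j : ℕ) → (j : ℕ) ≤ i → x j = z j) ∧
        (∀ j : Fin N, i < (j : ℕ) → x j = xs j)) with hAdef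
  set B : Finset (Fin N → (Fin b → Bool)) := univ.filter (fun x : Fin N → (Fin b → Bool) =>
        ∀ j : Fin N, i < (j : ℕ) → x j = xs j) with hBdef
  have hbN : 1 ≤ b * N := Nat.one_le_iff_ne_zero.mpr (Nat.mul_pos hb hN).ne'
  -- complement card
  have hSc : (univ \ S).card = 2 ^ (b * N - 1) := by
    have hcu : (univ : Finset (Fin N → (Fin b → Bool))).card = 2 ^ (b * N) := by
      rw [card_univ, Fintype.card_fun]
      simp [← pow_mul, mul_comm]
    have h2 : 2 ^ (b * N) = 2 ^ (b * N - 1) * 2 := by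
      rw [← pow_succ]; congr 1; omega
    rw [card_sdiff_of_subset (subset_univ S), hcu, hS]
    omega
  -- cardinalities of A and B
  have hAcard : A.card = (2^b)^k := by
    have hfc : A = univ.filter (fun x : Fin N → (Fin b → Bool) =>
        ∀ j : Fin N, k ≤ (j:ℕ) →
          x j = (fun j' : Fin N => if (j':ℕ) ≤ i then z j' else xs j') j) := by
      rw [hAdef]
      apply filter_congr
      intro x _
      constructor
      · rintro ⟨h1, h2⟩ j hkj
        by_cases hji : (j:ℕ) ≤ i
        · simp only [if_pos hji]; exact h1 j hkj hji
        · simp only [if_neg hji]; exact h2 j (lt_of_not_ge hji)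
      · intro h
        constructor
        · intro j hkj hji
          have := h j hkj
          simpa only [if_pos hji] using this
        · intro j hij
          have := h j (le_trans hki hij.le)
          simpa only [if_neg (not_le.mpr hij)] using this
    rw [hfc, card_filter_eq_on]
    congr 1
    have hiff : ∀ j : Fin N, (¬ k ≤ (j:ℕ)) ↔ (j:ℕ) < k := fun j => not_le
    rw [Fintype.card_congr (Equiv.subtypeEquivRight hiff)]
    exact card_lt_subtype (le_of_lt (lt_of_le_of_lt hki hiN))
  have hBcard : B.card = (2^b)^(i+1) := by
    rw [hBdef, card_filter_eq_on]
    congr 1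
    have hiff : ∀ j : Fin N, (¬ i < (j:ℕ)) ↔ (j:ℕ) < i + 1 := fun j => by omega
    rw [Fintype.card_congr (Equiv.subtypeEquivRight hiff)]
    exact card_lt_subtype hiN
  have hAB : A ⊆ B := by
    rw [hAdef, hBdef]
    exact Finset.monotone_filter_right _ (fun x _ hx => hx.2)
  -- real abbreviations
  set t : ℝ := (2:ℝ) ^ (-δ) with ht
  set n : ℕ := b * (i - k + 1) with hn
  set E : ℝ := (2:ℝ) ^ (δ * (n:ℝ)) with hE
  set lam : ℝ := (2 : ℝ) ^ (-((((i : ℝ) - k + 1)) * (δ * b))) with hlam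
  set D : ℝ := (2:ℝ) ^ (b * N - 1) with hD
  have hD0 : (0:ℝ) < D := by positivity
  have ht0 : (0:ℝ) < t := Real.rpow_pos_of_pos (by norm_num) _
  have ht2 : 1/2 ≤ t := by
    have h := Real.rpow_le_rpow_of_exponent_le (x := 2) one_le_two
      (by linarith : -(1:ℝ) ≤ -δ)
    calc (1/2 : ℝ) = (2:ℝ) ^ (-(1:ℝ)) := by
          rw [Real.rpow_neg (by norm_num), Real.rpow_one]; norm_num
      _ ≤ t := h
  have hexp : -((((i : ℝ) - k + 1)) * (δ * b)) = -(δ * (n:ℝ)) := by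
    rw [hn]
    push_cast [Nat.cast_sub hki]
    ring
  have hl0 : (0:ℝ) < lam := Real.rpow_pos_of_pos (by norm_num) _
  have hl1 : lam ≤ 1 := by
    rw [hlam, hexp]
    apply Real.rpow_le_one_of_one_le_of_nonpos one_le_two
    have : (0:ℝ) ≤ δ * (n:ℝ) := by positivity
    linarith
  have hlE : lam * E = 1 := by
    rw [hlam, hexp, hE, ← Real.rpow_add (by norm_num)]
    simp
  have htE : t * (2:ℝ)^δ = 1 := by
    rw [ht, ← Real.rpow_add (by norm_num)]
    simp
  have key2 : t * (E - 1) ≤ ((2:ℝ)^n - 1) * (1 - t) := by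
    have h := mul_le_mul_of_nonneg_left (key_ineq n δ hδ.le hδ1.le) ht0.le
    calc t * (E - 1) ≤ t * (((2:ℝ)^n - 1) * ((2:ℝ)^δ - 1)) := h
      _ = ((2:ℝ)^n - 1) * (t * (2:ℝ)^δ) - ((2:ℝ)^n - 1) * t := by ring
      _ = ((2:ℝ)^n - 1) * 1 - ((2:ℝ)^n - 1) * t := by rw [htE]
      _ = ((2:ℝ)^n - 1) * (1 - t) := by ring
  -- sums
  have hPeq : ∀ x, P x = if x ∈ S then t / D else (1 - t) / D := by
    intro x
    rw [hP x, hS, hSc, hD]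
    push_cast
    rfl
  have hsplit : ∀ T : Finset (Fin N → (Fin b → Bool)),
      ∑ x ∈ T, P x = ((T ∩ S).card : ℝ) * (t / D) + ((T \ S).card : ℝ) * ((1 - t) / D) := by
    intro T
    rw [Finset.sum_congr rfl (fun x _ => hPeq x), sum_split]
  rw [hsplit A, hsplit B]
  -- cast cardinalities
  set a : ℝ := ((A ∩ S).card : ℝ) with ha
  set c : ℝ := ((B ∩ S).card : ℝ) with hc
  set A0 : ℝ := ((2:ℝ)^b)^k with hA0
  have hA0a : ((A.card : ℕ) : ℝ) = A0 := by rw [hAcard]; push_cast; rfl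
  have hBA : ((B.card : ℕ) : ℝ) = A0 * (2:ℝ)^n := by
    rw [hBcard, hA0]
    have : (2^b)^(i+1) = (2^b)^k * 2^n := by
      have hsum' : k + (i - k + 1) = i + 1 := by omega
      rw [← pow_mul, ← pow_mul, ← pow_add, hn, ← Nat.mul_add, hsum']
    rw [this]
    push_cast
    ring
  have hAsd : ((A \ S).card : ℝ) = A0 - a := by
    have := Finset.card_inter_add_card_sdiff A S
    have hcast : a + ((A \ S).card : ℝ) = ((A.card : ℕ) : ℝ) := by
      rw [ha]; exact_mod_cast congrArg (Nat.cast : ℕ → ℝ) this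
    rw [hA0a] at hcast
    linarith
  have hBsd : ((B \ S).card : ℝ) = A0 * (2:ℝ)^n - c := by
    have := Finset.card_inter_add_card_sdiff B S
    have hcast : c + ((B \ S).card : ℝ) = ((B.card : ℕ) : ℝ) := by
      rw [hc]; exact_mod_cast congrArg (Nat.cast : ℕ → ℝ) this
    rw [hBA] at hcast
    linarith
  have hac : a ≤ c := by
    rw [ha, hc]
    exact_mod_cast card_le_card (inter_subset_inter hAB (Finset.Subset.refl S))
  have ha0 : (0:ℝ) ≤ a := by rw [ha]; positivity
  have haA : a ≤ A0 := by
    rw [ha, ← hA0a]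
    exact_mod_cast card_le_card (inter_subset_left)
  rw [hAsd, hBsd]
  have hmain : a * t + (A0 - a) * (1 - t) ≤ lam * (c * t + (A0 * (2:ℝ)^n - c) * (1 - t)) :=
    core_ineq t lam E ((2:ℝ)^n) a c A0 ht2 hl0 hl1 hlE key2 hac ha0 haA
  calc a * (t / D) + (A0 - a) * ((1 - t) / D)
      = (a * t + (A0 - a) * (1 - t)) * (1 / D) := by ring
    _ ≤ (lam * (c * t + (A0 * (2:ℝ)^n - c) * (1 - t))) * (1 / D) := by
        apply mul_le_mul_of_nonneg_right hmain
        positivity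
    _ = lam * (c * (t / D) + (A0 * (2:ℝ)^n - c) * ((1 - t) / D)) := by ring
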